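/- arXiv:1405.2946 — 4 statements merged into one kernel-verified Lean document; each statement's English description precedes it below -/
import Mathlib

section
/- Let p > 0 and let μ : [0,∞) → [1,∞) be a differentiable growth rate. Suppose the evolution operator U : Δ → B(X) with compatible projection valued function P satisfies ‖U_Q(s,t)Q(t)‖ ≤ N₂ (μ(t)/μ(s))^{−b} μ(t)^ε for all t ≥ s ≥ 0, where b > 0, ε ≥ 0, N₂ ≥ 1. Then for every 0 < γ < b and every t ≥ 0, x ∈ X: ∫₀^{t} (μ'(τ)/μ(τ)) (μ(t)/μ(τ))^{pγ} ‖U_Q(τ,t)Q(t)x‖^p dτ ≤ (N₂^p/(p(b−γ))) μ(t)^{pε} ‖x‖^p. -/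
open Real MeasureTheory Filter

noncomputable section

/-- A growth rate: an increasing function `μ : [0,∞) → [1,∞)` with `μ 0 = 1` and
`μ t → ∞` as `t → ∞`. -/
def IsGrowthRate (μ : ℝ → ℝ) : Prop :=
  (∀ t, 0 ≤ t → 1 ≤ μ t) ∧ MonotoneOn μ (Set.Ici 0) ∧ μ 0 = 1 ∧
    Filter.Tendsto μ Filter.atTop Filter.atTop

variable {X : Type*} [NormedAddCommGroup X] [NormedSpace ℝ X]

/-- An evolution operator on `X`. -/
def IsEvolutionOperator (U : ℝ → ℝ → X →L[ℝ] X) : Prop :=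
  (∀ t, 0 ≤ t → U t t = 1) ∧
  (∀ s τ t, 0 ≤ s → s ≤ τ → τ ≤ t → (U t τ).comp (U τ s) = U t s) ∧
  (∀ x : X, ContinuousOn (fun q : ℝ × ℝ => U q.1 q.2 x) {q : ℝ × ℝ | 0 ≤ q.2 ∧ q.2 ≤ q.1})

/-- A (strongly continuous) projection valued function. -/
def IsProjectionValued (P : ℝ → X →L[ℝ] X) : Prop :=
  (∀ t, 0 ≤ t → (P t).comp (P t) = P t) ∧
  (∀ x : X, ContinuousOn (fun t => P t x) (Set.Ici 0))

/-- `P` is compatible with the evolution operator `U`; `V s t` plays the role of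
`U_Q(s,t)`, the inverse of the restriction `U(t,s)|_{Q(s)X} : Q(s)X → Q(t)X`,
where `Q t = 1 - P t`. -/
def CompatibleProjection (U V : ℝ → ℝ → X →L[ℝ] X) (P : ℝ → X →L[ℝ] X) : Prop :=
  (∀ s t, 0 ≤ s → s ≤ t → (P t).comp (U t s) = (U t s).comp (P s)) ∧
  (∀ s t, 0 ≤ s → s ≤ t → ∀ x : X,
    (1 - P s) (V s t ((1 - P t) x)) = V s t ((1 - P t) x)) ∧
  (∀ s t, 0 ≤ s → s ≤ t → ∀ x : X, U t s (V s t ((1 - P t) x)) = (1 - P t) x) ∧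
  (∀ s t, 0 ≤ s → s ≤ t → ∀ x : X, V s t (U t s ((1 - P s) x)) = (1 - P s) x)

/-- Nonuniform μ-dichotomy. -/
def NonuniformMuDichotomy (μ : ℝ → ℝ) (U V : ℝ → ℝ → X →L[ℝ] X)
    (P : ℝ → X →L[ℝ] X) : Prop :=
  ∃ a b ε N₁ N₂ : ℝ, 0 < a ∧ 0 < b ∧ 0 ≤ ε ∧ 1 ≤ N₁ ∧ 1 ≤ N₂ ∧
    ∀ s t, 0 ≤ s → s ≤ t →
      ‖(U t s).comp (P s)‖ ≤ N₁ * (μ t / μ s) ^ (-a) * μ s ^ ε ∧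
      ‖(V s t).comp (1 - P t)‖ ≤ N₂ * (μ t / μ s) ^ (-b) * μ t ^ ε

/-- Uniform μ-dichotomy (the case ε = 0). -/
def UniformMuDichotomy (μ : ℝ → ℝ) (U V : ℝ → ℝ → X →L[ℝ] X)
    (P : ℝ → X →L[ℝ] X) : Prop :=
  ∃ a b N₁ N₂ : ℝ, 0 < a ∧ 0 < b ∧ 1 ≤ N₁ ∧ 1 ≤ N₂ ∧
    ∀ s t, 0 ≤ s → s ≤ t →
      ‖(U t s).comp (P s)‖ ≤ N₁ * (μ t / μ s) ^ (-a) ∧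
      ‖(V s t).comp (1 - P t)‖ ≤ N₂ * (μ t / μ s) ^ (-b)

/-- The Green function associated to `U` and `P`:
`G(t,s) = U(t,s)P(s)` for `t > s` and `G(t,s) = -U_Q(t,s)Q(s)` for `t < s`. -/
def greenFunction (U V : ℝ → ℝ → X →L[ℝ] X) (P : ℝ → X →L[ℝ] X) (t s : ℝ) :
    X →L[ℝ] X :=
  if s < t then (U t s).comp (P s)
  else if t < s then -((V t s).comp (1 - P s))
  else 0

/-- Membership in the class `H^μ_{γ,p}(P)`. -/
def MemHClass (μ : ℝ → ℝ) (P : ℝ → X →L[ℝ] X) (γ p : ℝ) (H : ℝ → X →L[ℝ] X) : Prop :=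
  (∀ x : X, ContinuousOn (fun t => H t x) (Set.Ici 0)) ∧
  (∀ t, 0 ≤ t → ∀ x : X,
    ‖H t x‖ ≤ (deriv μ t / μ t) ^ (1 / p) * μ t ^ γ * ‖P t x‖ +
      (deriv μ t / μ t) ^ (1 / p) * μ t ^ (-γ) * ‖(1 - P t) x‖)

open Set

/-! The dichotomy bound turns the integrand into `N₂ᵖ μ(t)^{pε} ‖x‖ᵖ` times
`(μ'(τ)/μ(τ)) (μ(τ)/μ(t))^c` with `c = p(b - γ) > 0`. The latter is the derivative of
`μ(τ)^c / (c μ(t)^c)`, and `μ' ≥ 0` because `μ` is increasing, so by the fundamental theorem of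
calculus its integral over `(0, t]` is `(1 - μ(t)^{-c}) / c ≤ 1 / c`. -/

theorem lintegral_ofReal_deriv_eq_sub {g g' : ℝ → ℝ} {a b : ℝ} (hab : a ≤ b)
    (hcont : ContinuousOn g (Icc a b)) (hderiv : ∀ x ∈ Ioo a b, HasDerivAt g (g' x) x)
    (hpos : ∀ x ∈ Ioo a b, 0 ≤ g' x) :
    ∫⁻ x in Ioc a b, ENNReal.ofReal (g' x) = ENNReal.ofReal (g b - g a) := by
  have hint : IntegrableOn g' (Ioc a b) :=
    intervalIntegral.integrableOn_deriv_of_nonneg hcont hderiv hpos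
  have hnonneg : 0 ≤ᵐ[volume.restrict (Ioc a b)] g' := by
    rw [Measure.restrict_congr_set Ioo_ae_eq_Ioc.symm]
    exact ae_restrict_of_forall_mem measurableSet_Ioo hpos
  rw [← intervalIntegral.integral_eq_sub_of_hasDerivAt_of_le hab hcont hderiv
      ((intervalIntegrable_iff_integrableOn_Ioc_of_le hab).2 hint),
    intervalIntegral.integral_of_le hab, ofReal_integral_eq_lintegral_ofReal hint hnonneg]

theorem IsGrowthRate.pos {μ : ℝ → ℝ} (hμ : IsGrowthRate μ) {t : ℝ} (ht : 0 ≤ t) : 0 < μ t :=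
  one_pos.trans_le (hμ.1 t ht)

theorem IsGrowthRate.deriv_nonneg {μ : ℝ → ℝ} (hμ : IsGrowthRate μ) {t : ℝ} (ht : 0 ≤ t)
    (hd : DifferentiableAt ℝ μ t) : 0 ≤ deriv μ t :=
  hd.derivWithin (uniqueDiffOn_Ici 0 t ht) ▸ hμ.2.1.derivWithin_nonneg

theorem IsGrowthRate.lintegral_logDeriv_mul_rpow_le {μ : ℝ → ℝ} (hμ : IsGrowthRate μ)
    (hdiff : ∀ t, 0 ≤ t → DifferentiableAt ℝ μ t) {c t : ℝ} (hc : 0 < c) (ht : 0 ≤ t) :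
    ∫⁻ τ in Ioc 0 t, ENNReal.ofReal (deriv μ τ / μ τ * (μ τ / μ t) ^ c)
      ≤ ENNReal.ofReal (1 / c) := by
  have hμt := hμ.pos ht
  have hderiv : ∀ τ ∈ Ioo 0 t,
      HasDerivAt (fun s ↦ μ s ^ c) (deriv μ τ * c * μ τ ^ (c - 1)) τ := fun τ hτ ↦
    (hdiff τ hτ.1.le).hasDerivAt.rpow_const (Or.inl (hμ.pos hτ.1.le).ne')
  have hcont : ContinuousOn (fun s ↦ μ s ^ c) (Icc 0 t) := fun τ hτ ↦
    ((hdiff τ hτ.1).continuousAt.rpow_const (Or.inr hc.le)).continuousWithinAt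
  have hFTC := lintegral_ofReal_deriv_eq_sub ht hcont hderiv fun τ hτ ↦ by
    have := hμ.deriv_nonneg hτ.1.le (hdiff τ hτ.1.le)
    have := hμ.pos hτ.1.le
    positivity
  have hintegrand : ∀ τ ∈ Ioc 0 t, deriv μ τ / μ τ * (μ τ / μ t) ^ c
      = (c * μ t ^ c)⁻¹ * (deriv μ τ * c * μ τ ^ (c - 1)) := fun τ hτ ↦ by
    have := hμ.pos hτ.1.le
    rw [div_rpow this.le hμt.le, rpow_sub_one this.ne']
    field_simp
  calc ∫⁻ τ in Ioc 0 t, ENNReal.ofReal (deriv μ τ / μ τ * (μ τ / μ t) ^ c)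
      = ∫⁻ τ in Ioc 0 t, ENNReal.ofReal (c * μ t ^ c)⁻¹ *
          ENNReal.ofReal (deriv μ τ * c * μ τ ^ (c - 1)) :=
        setLIntegral_congr_fun measurableSet_Ioc fun τ hτ ↦ by
          rw [hintegrand τ hτ, ENNReal.ofReal_mul (by positivity)]
    _ = ENNReal.ofReal ((c * μ t ^ c)⁻¹ * (μ t ^ c - 1)) := by
        rw [lintegral_const_mul' _ _ ENNReal.ofReal_ne_top, hFTC, hμ.2.2.1, one_rpow,
          ← ENNReal.ofReal_mul (by positivity)]
    _ ≤ ENNReal.ofReal (1 / c) := by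
        refine ENNReal.ofReal_le_ofReal ?_
        calc (c * μ t ^ c)⁻¹ * (μ t ^ c - 1) ≤ (c * μ t ^ c)⁻¹ * μ t ^ c := by
              gcongr; linarith
          _ = 1 / c := by field_simp

theorem rpow_mul_rpow_norm_apply_le {E F : Type*} [SeminormedAddCommGroup E]
    [SeminormedAddCommGroup F] [NormedSpace ℝ E] [NormedSpace ℝ F] (A : E →L[ℝ] F)
    {m M N b ε p γ : ℝ} (hm : 0 < m) (hM : 0 < M) (hN : 0 ≤ N) (hp : 0 ≤ p)
    (hA : ‖A‖ ≤ N * (M / m) ^ (-b) * M ^ ε) (x : E) :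
    (M / m) ^ (p * γ) * ‖A x‖ ^ p ≤ N ^ p * M ^ (p * ε) * ‖x‖ ^ p * (m / M) ^ (p * (b - γ)) := by
  have hr : 0 < M / m := div_pos hM hm
  have hAx : ‖A x‖ ≤ N * (M / m) ^ (-b) * M ^ ε * ‖x‖ :=
    (A.le_opNorm x).trans (mul_le_mul_of_nonneg_right hA (norm_nonneg x))
  have hAxp : ‖A x‖ ^ p ≤ N ^ p * (M / m) ^ (-(p * b)) * M ^ (p * ε) * ‖x‖ ^ p := by
    refine (rpow_le_rpow (norm_nonneg _) hAx hp).trans_eq ?_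
    rw [mul_rpow (by positivity) (norm_nonneg x), mul_rpow (by positivity) (by positivity),
      mul_rpow hN (by positivity), ← rpow_mul hr.le, ← rpow_mul hM.le]
    ring_nf
  calc (M / m) ^ (p * γ) * ‖A x‖ ^ p
      ≤ (M / m) ^ (p * γ) * (N ^ p * (M / m) ^ (-(p * b)) * M ^ (p * ε) * ‖x‖ ^ p) := by
        gcongr
    _ = N ^ p * M ^ (p * ε) * ‖x‖ ^ p * (M / m) ^ (p * γ + -(p * b)) := by
        rw [rpow_add hr]; ring
    _ = N ^ p * M ^ (p * ε) * ‖x‖ ^ p * (m / M) ^ (p * (b - γ)) := by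
        rw [← inv_div M m, inv_rpow hr.le, ← rpow_neg hr.le]
        ring_nf

theorem unstable_integral_estimate_general
    {X : Type*} [NormedAddCommGroup X] [NormedSpace ℝ X]
    (μ : ℝ → ℝ) (hgr : IsGrowthRate μ)
    (hdiff : ∀ t, 0 ≤ t → DifferentiableAt ℝ μ t)
    (p : ℝ) (hp : 0 < p)
    (V : ℝ → ℝ → X →L[ℝ] X) (P : ℝ → X →L[ℝ] X)
    (b ε N₂ : ℝ) (hN₂ : 1 ≤ N₂)
    (hdich : ∀ s t, 0 ≤ s → s ≤ t →
      ‖(V s t).comp (1 - P t)‖ ≤ N₂ * (μ t / μ s) ^ (-b) * μ t ^ ε)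
    (γ : ℝ) (hγ : γ < b) (t : ℝ) (ht : 0 ≤ t) (x : X) :
    ∫⁻ τ in Set.Ioc (0 : ℝ) t, ENNReal.ofReal
        (deriv μ τ / μ τ * (μ t / μ τ) ^ (p * γ) * ‖V τ t ((1 - P t) x)‖ ^ p)
      ≤ ENNReal.ofReal (N₂ ^ p / (p * (b - γ)) * μ t ^ (p * ε) * ‖x‖ ^ p) := by
  set c := p * (b - γ)
  have hc : 0 < c := mul_pos hp (sub_pos.2 hγ)
  set K := N₂ ^ p * μ t ^ (p * ε) * ‖x‖ ^ p with hK_def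
  have hN₂' : 0 ≤ N₂ := zero_le_one.trans hN₂
  have hK : 0 ≤ K := by
    have := hgr.pos ht
    positivity
  calc _ ≤ ∫⁻ τ in Ioc 0 t,
        ENNReal.ofReal K * ENNReal.ofReal (deriv μ τ / μ τ * (μ τ / μ t) ^ c) := by
        refine setLIntegral_mono' measurableSet_Ioc fun τ hτ ↦ ?_
        rw [← ENNReal.ofReal_mul hK]
        refine ENNReal.ofReal_le_ofReal ?_
        have hμτ := hgr.pos hτ.1.le
        have hμ' := hgr.deriv_nonneg hτ.1.le (hdiff τ hτ.1.le)
        calc _ = deriv μ τ / μ τ * ((μ t / μ τ) ^ (p * γ) * ‖V τ t ((1 - P t) x)‖ ^ p) :=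
              mul_assoc _ _ _
          _ ≤ deriv μ τ / μ τ * (K * (μ τ / μ t) ^ c) :=
              mul_le_mul_of_nonneg_left (rpow_mul_rpow_norm_apply_le _ hμτ (hgr.pos ht)
                hN₂' hp.le (hdich τ t hτ.1.le hτ.2) x) (by positivity)
          _ = _ := by ring
    _ = ENNReal.ofReal K *
        ∫⁻ τ in Ioc 0 t, ENNReal.ofReal (deriv μ τ / μ τ * (μ τ / μ t) ^ c) :=
        lintegral_const_mul' _ _ ENNReal.ofReal_ne_top
    _ ≤ ENNReal.ofReal K * ENNReal.ofReal (1 / c) := by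
        gcongr
        exact hgr.lintegral_logDeriv_mul_rpow_le hdiff hc ht
    _ = _ := by
        rw [← ENNReal.ofReal_mul hK, hK_def]
        ring_nf

/-- The "unstable part" of Theorem 3.1: if `‖U_Q(s,t)Q(t)‖ ≤ N₂ (μ(t)/μ(s))^{-b} μ(t)^ε`
for all `t ≥ s ≥ 0`, then for every `0 < γ < b`, `t ≥ 0`, `x ∈ X`:
`∫₀^t (μ'(τ)/μ(τ)) (μ(t)/μ(τ))^{pγ} ‖U_Q(τ,t)Q(t)x‖^p dτ
  ≤ (N₂^p/(p(b-γ))) μ(t)^{pε} ‖x‖^p`. -/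
theorem unstable_integral_estimate
    {X : Type*} [NormedAddCommGroup X] [NormedSpace ℝ X] [CompleteSpace X]
    (μ : ℝ → ℝ) (hgr : IsGrowthRate μ)
    (hdiff : ∀ t, 0 ≤ t → DifferentiableAt ℝ μ t)
    (p : ℝ) (hp : 0 < p)
    (U V : ℝ → ℝ → X →L[ℝ] X) (P : ℝ → X →L[ℝ] X)
    (hU : IsEvolutionOperator U) (hP : IsProjectionValued P)
    (hC : CompatibleProjection U V P)
    (b ε N₂ : ℝ) (hb : 0 < b) (hε : 0 ≤ ε) (hN₂ : 1 ≤ N₂)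
    (hdich : ∀ s t, 0 ≤ s → s ≤ t →
      ‖(V s t).comp (1 - P t)‖ ≤ N₂ * (μ t / μ s) ^ (-b) * μ t ^ ε)
    (γ : ℝ) (hγ0 : 0 < γ) (hγ : γ < b) (t : ℝ) (ht : 0 ≤ t) (x : X) :
    ∫⁻ τ in Set.Ioc (0 : ℝ) t, ENNReal.ofReal
        (deriv μ τ / μ τ * (μ t / μ τ) ^ (p * γ) * ‖V τ t ((1 - P t) x)‖ ^ p)
      ≤ ENNReal.ofReal (N₂ ^ p / (p * (b - γ)) * μ t ^ (p * ε) * ‖x‖ ^ p) :=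
  unstable_integral_estimate_general μ hgr hdiff p hp V P b ε N₂ hN₂ hdich γ hγ t ht x
end
end

section
/- Let μ : [0,∞) → [1,∞) be a differentiable growth rate with K_μ := sup_{t ≥ 0} μ'(t)/μ(t) < +∞, and let U : Δ → B(X) be an evolution operator with compatible projection valued function P satisfying ‖U_Q(s,t)Q(t)‖ ≤ M (μ'(t)/μ(t)) (μ(t)/μ(s))^{ω} μ(t)^α for all t > s ≥ 0, for some ω > 0, α ≥ 0, M ≥ 1. Assume that for some p ≥ 1, γ > α, ε ≥ 0 and D > 0 one has ∫₀^{t} (μ'(τ)/μ(τ)) (μ(t)/μ(τ))^{pγ} ‖U_Q(τ,t)Q(t)x‖^p dτ ≤ D μ(t)^{pε} ‖x‖^p for all t ≥ 0 and x ∈ X. Then for all t ≥ s+1, s ≥ 0 and x ∈ X: ‖U_Q(s,t)Q(t)x‖^p ≤ D M^p K_μ^{p−1} e^{K_μ(α+ω+γ)p} (μ(t)/μ(s))^{−p(γ+α)} μ(t)^{p(ε+α)} ‖x‖^p. -/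
open Real MeasureTheory Filter

noncomputable section

variable {X : Type*} [NormedAddCommGroup X] [NormedSpace ℝ X]

/-! For `τ ∈ (s, s + 1]` the cocycle identity `U_Q(s,t)Q(t) = U_Q(s,τ)Q(τ) U_Q(τ,t)Q(t)` and the
bound on `U_Q(s,τ)Q(τ)` control `‖U_Q(s,t)Q(t)x‖^p` by a constant times the integrand of the
integral hypothesis at `τ`. The constant does not depend on `τ`, since `(μ'/μ)^p ≤ K_μ^{p-1} μ'/μ`
and `μ(τ)/μ(s) ≤ e^{K_μ}` (integrate `(log μ)' ≤ K_μ` over `[s, τ]`). Averaging over the unit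
interval `(s, s + 1] ⊆ (0, t]` then yields the estimate. -/

open Set

lemma deriv_nonneg_of_monotoneOn_Ici {f : ℝ → ℝ} {a x : ℝ} (hf : MonotoneOn f (Ici a))
    (hx : a < x) : 0 ≤ deriv f x := by
  rw [← derivWithin_of_mem_nhds (Ici_mem_nhds hx)]
  exact hf.derivWithin_nonneg

lemma log_sub_log_le_of_deriv_div_le {f : ℝ → ℝ} {K a b : ℝ} (hab : a ≤ b)
    (hpos : ∀ x ∈ Icc a b, 0 < f x) (hdiff : ∀ x ∈ Icc a b, DifferentiableAt ℝ f x)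
    (hK : ∀ x ∈ Ioo a b, deriv f x / f x ≤ K) :
    log (f b) - log (f a) ≤ K * (b - a) := by
  have hlog : ∀ x ∈ Icc a b, DifferentiableAt ℝ (fun y => log (f y)) x := fun x hx =>
    (hdiff x hx).log (hpos x hx).ne'
  refine (convex_Icc a b).image_sub_le_mul_sub_of_deriv_le
    (fun x hx => (hlog x hx).continuousAt.continuousWithinAt)
    (fun x hx => (hlog x (interior_subset hx)).differentiableWithinAt) (fun x hx => ?_)
    a (left_mem_Icc.2 hab) b (right_mem_Icc.2 hab) hab
  rw [interior_Icc] at hx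
  rw [deriv.log (hdiff x (Ioo_subset_Icc_self hx)) (hpos x (Ioo_subset_Icc_self hx)).ne']
  exact hK x hx

lemma rpow_le_rpow_sub_one_mul {a K p : ℝ} (ha : 0 ≤ a) (haK : a ≤ K) (hp : 1 ≤ p) :
    a ^ p ≤ K ^ (p - 1) * a := by
  calc a ^ p = a ^ (p - 1) * a := by
        rw [← rpow_add_one' ha (by linarith), sub_add_cancel]
    _ ≤ K ^ (p - 1) * a := by gcongr

lemma rpow_div_mul_rpow_le_exp_mul {a b c K p α ω γ : ℝ} (ha : 0 < a) (hb : 0 < b) (hc : 0 < c)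
    (hK : log b - log a ≤ K) (hp : 0 ≤ p) (hαωγ : 0 ≤ α + ω + γ) :
    ((b / a) ^ ω * b ^ α) ^ p ≤
      exp (K * (α + ω + γ) * p) * (c / a) ^ (-(p * (γ + α))) * c ^ (p * α) *
        (c / b) ^ (p * γ) := by
  rw [← log_le_log_iff (by positivity) (by positivity), log_rpow (by positivity),
    log_mul (by positivity) (by positivity), log_rpow (div_pos hb ha), log_rpow hb,
    log_mul (by positivity) (by positivity), log_mul (by positivity) (by positivity),
    log_mul (by positivity) (by positivity), log_exp, log_rpow (div_pos hc ha), log_rpow hc,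
    log_rpow (div_pos hc hb), log_div hb.ne' ha.ne', log_div hc.ne' ha.ne',
    log_div hc.ne' hb.ne']
  -- the two sides differ by `p (α + ω + γ) (K - (log b - log a))`
  nlinarith [mul_nonneg hp hαωγ]

lemma le_mul_of_forall_le_mul_of_setLIntegral_le {Ω : Type*} [MeasurableSpace Ω] {ν : Measure Ω}
    {S T : Set Ω} (hS : MeasurableSet S) (hνS : ν S = 1) (hST : S ⊆ T) {f : Ω → ℝ}
    {A B C : ℝ} (hC : 0 ≤ C) (hB : 0 ≤ B) (hA : ∀ τ ∈ S, A ≤ C * f τ)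
    (hf : ∫⁻ τ in T, ENNReal.ofReal (f τ) ∂ν ≤ ENNReal.ofReal B) : A ≤ C * B := by
  refine (ENNReal.ofReal_le_ofReal_iff (mul_nonneg hC hB)).1 ?_
  calc ENNReal.ofReal A = ∫⁻ _ in S, ENNReal.ofReal A ∂ν := by
        rw [setLIntegral_const, hνS, mul_one]
    _ ≤ ∫⁻ τ in S, ENNReal.ofReal C * ENNReal.ofReal (f τ) ∂ν :=
        setLIntegral_mono' hS fun τ hτ => (ENNReal.ofReal_mul hC).symm ▸
          ENNReal.ofReal_le_ofReal (hA τ hτ)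
    _ ≤ ∫⁻ τ in T, ENNReal.ofReal C * ENNReal.ofReal (f τ) ∂ν := lintegral_mono_set hST
    _ = ENNReal.ofReal C * ∫⁻ τ in T, ENNReal.ofReal (f τ) ∂ν :=
        lintegral_const_mul' _ _ ENNReal.ofReal_ne_top
    _ ≤ ENNReal.ofReal (C * B) := by
        rw [ENNReal.ofReal_mul hC]
        gcongr

section

variable {U V : ℝ → ℝ → X →L[ℝ] X} {P : ℝ → X →L[ℝ] X}

lemma CompatibleProjection.unstable_cocycle (hC : CompatibleProjection U V P)
    (hU : IsEvolutionOperator U) {s τ t : ℝ} (hs : 0 ≤ s) (hsτ : s ≤ τ) (hτt : τ ≤ t) (x : X) :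
    V s t ((1 - P t) x) = V s τ ((1 - P τ) (V τ t ((1 - P t) x))) := by
  have hτ : 0 ≤ τ := hs.trans hsτ
  set z := V s τ ((1 - P τ) (V τ t ((1 - P t) x)))
  have hQz : (1 - P s) z = z := hC.2.1 s τ hs hsτ _
  have hUz : U t s z = (1 - P t) x := by
    rw [← hU.2.1 s τ t hs hsτ hτt, ContinuousLinearMap.comp_apply, hC.2.2.1 s τ hs hsτ,
      hC.2.1 τ t hτ hτt, hC.2.2.1 τ t hτ hτt]
  calc V s t ((1 - P t) x) = V s t (U t s ((1 - P s) z)) := by rw [hQz, hUz]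
    _ = z := by rw [hC.2.2.2 s t hs (hsτ.trans hτt), hQz]

lemma CompatibleProjection.norm_unstable_le (hC : CompatibleProjection U V P)
    (hU : IsEvolutionOperator U) {s τ t : ℝ} (hs : 0 ≤ s) (hsτ : s ≤ τ) (hτt : τ ≤ t) (x : X) :
    ‖V s t ((1 - P t) x)‖ ≤ ‖(V s τ).comp (1 - P τ)‖ * ‖V τ t ((1 - P t) x)‖ := by
  rw [hC.unstable_cocycle hU hs hsτ hτt]
  exact ((V s τ).comp (1 - P τ)).le_opNorm _

lemma unstable_rpow_le_of_mem_Ioc {μ : ℝ → ℝ} {Kμ M ω α p γ : ℝ} (hgr : IsGrowthRate μ)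
    (hdiff : ∀ t, 0 ≤ t → DifferentiableAt ℝ μ t)
    (hKμ : ∀ t, 0 ≤ t → deriv μ t / μ t ≤ Kμ)
    (hU : IsEvolutionOperator U) (hC : CompatibleProjection U V P) (hM : 0 ≤ M)
    (hVQ : ∀ s t, 0 ≤ s → s < t →
      ‖(V s t).comp (1 - P t)‖ ≤ M * (deriv μ t / μ t) * (μ t / μ s) ^ ω * μ t ^ α)
    (hp : 1 ≤ p) (hαωγ : 0 ≤ α + ω + γ) {s τ t : ℝ} (hs : 0 ≤ s) (hτ : τ ∈ Ioc s (s + 1))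
    (hτt : τ ≤ t) (x : X) :
    ‖V s t ((1 - P t) x)‖ ^ p ≤
      M ^ p * Kμ ^ (p - 1) * exp (Kμ * (α + ω + γ) * p) * (μ t / μ s) ^ (-(p * (γ + α))) *
        μ t ^ (p * α) * (deriv μ τ / μ τ * (μ t / μ τ) ^ (p * γ) * ‖V τ t ((1 - P t) x)‖ ^ p) := by
  have hμ : ∀ r, 0 ≤ r → 0 < μ r := fun r hr => one_pos.trans_le (hgr.1 r hr)
  have hτ0 : 0 < τ := hs.trans_lt hτ.1
  have hμs := hμ s hs
  have hμτ := hμ τ hτ0.le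
  have hμt := hμ t (hτ0.le.trans hτt)
  set a := deriv μ τ / μ τ
  have ha : 0 ≤ a := div_nonneg (deriv_nonneg_of_monotoneOn_Ici hgr.2.1 hτ0) hμτ.le
  have haK : a ≤ Kμ := hKμ τ hτ0.le
  have hK0 : 0 ≤ Kμ := ha.trans haK
  have hlog : log (μ τ) - log (μ s) ≤ Kμ := by
    refine (log_sub_log_le_of_deriv_div_le hτ.1.le (fun r hr => hμ r (hs.trans hr.1))
      (fun r hr => hdiff r (hs.trans hr.1)) (fun r hr => hKμ r (hs.trans hr.1.le))).trans ?_
    nlinarith [hτ.2]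
  have hnorm : ‖V s t ((1 - P t) x)‖ ≤
      M * a * (μ τ / μ s) ^ ω * μ τ ^ α * ‖V τ t ((1 - P t) x)‖ :=
    (hC.norm_unstable_le hU hs hτ.1.le hτt x).trans (by gcongr; exact hVQ s τ hs hτ.1)
  calc ‖V s t ((1 - P t) x)‖ ^ p
      ≤ (M * a * ((μ τ / μ s) ^ ω * μ τ ^ α) * ‖V τ t ((1 - P t) x)‖) ^ p := by
        rw [← mul_assoc]
        gcongr
    _ = M ^ p * a ^ p * ((μ τ / μ s) ^ ω * μ τ ^ α) ^ p * ‖V τ t ((1 - P t) x)‖ ^ p := by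
        rw [mul_rpow (by positivity) (by positivity), mul_rpow (by positivity) (by positivity),
          mul_rpow hM ha]
    _ ≤ M ^ p * (Kμ ^ (p - 1) * a) * (exp (Kμ * (α + ω + γ) * p) *
          (μ t / μ s) ^ (-(p * (γ + α))) * μ t ^ (p * α) * (μ t / μ τ) ^ (p * γ)) *
          ‖V τ t ((1 - P t) x)‖ ^ p := by
        gcongr M ^ p * ?_ * ?_ * _
        · exact rpow_le_rpow_sub_one_mul ha haK hp
        · exact rpow_div_mul_rpow_le_exp_mul hμs hμτ hμt hlog (by linarith) hαωγ
    _ = _ := by ring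

end

theorem unstable_pointwise_estimate_far_general
    {X : Type*} [NormedAddCommGroup X] [NormedSpace ℝ X]
    (μ : ℝ → ℝ) (Kμ : ℝ) (hgr : IsGrowthRate μ)
    (hdiff : ∀ t, 0 ≤ t → DifferentiableAt ℝ μ t)
    (hKμ : ∀ t, 0 ≤ t → deriv μ t / μ t ≤ Kμ)
    (U V : ℝ → ℝ → X →L[ℝ] X) (P : ℝ → X →L[ℝ] X)
    (hU : IsEvolutionOperator U)
    (hC : CompatibleProjection U V P)
    (M ω α : ℝ) (hω : 0 < ω) (hα : 0 ≤ α) (hM : 1 ≤ M)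
    (hVQ : ∀ s t, 0 ≤ s → s < t →
      ‖(V s t).comp (1 - P t)‖ ≤ M * (deriv μ t / μ t) * (μ t / μ s) ^ ω * μ t ^ α)
    (p γ ε D : ℝ) (hp : 1 ≤ p) (hγ : α < γ) (hD : 0 < D)
    (hint : ∀ t, 0 ≤ t → ∀ x : X,
      ∫⁻ τ in Set.Ioc (0 : ℝ) t, ENNReal.ofReal
          (deriv μ τ / μ τ * (μ t / μ τ) ^ (p * γ) * ‖V τ t ((1 - P t) x)‖ ^ p)
        ≤ ENNReal.ofReal (D * μ t ^ (p * ε) * ‖x‖ ^ p)) :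
    ∀ s t, 0 ≤ s → s + 1 ≤ t → ∀ x : X,
      ‖V s t ((1 - P t) x)‖ ^ p ≤
        D * M ^ p * Kμ ^ (p - 1) * Real.exp (Kμ * (α + ω + γ) * p) *
          (μ t / μ s) ^ (-(p * (γ + α))) * μ t ^ (p * (ε + α)) * ‖x‖ ^ p := by
  intro s t hs hst x
  have hμ : ∀ r, 0 ≤ r → 0 < μ r := fun r hr => one_pos.trans_le (hgr.1 r hr)
  have hμs := hμ s hs
  have hμt := hμ t (by linarith)
  have hKμ0 : 0 ≤ Kμ :=
    (div_nonneg (deriv_nonneg_of_monotoneOn_Ici hgr.2.1 one_pos) (hμ 1 zero_le_one).le).trans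
      (hKμ 1 zero_le_one)
  calc ‖V s t ((1 - P t) x)‖ ^ p
      ≤ M ^ p * Kμ ^ (p - 1) * exp (Kμ * (α + ω + γ) * p) * (μ t / μ s) ^ (-(p * (γ + α))) *
          μ t ^ (p * α) * (D * μ t ^ (p * ε) * ‖x‖ ^ p) :=
        le_mul_of_forall_le_mul_of_setLIntegral_le measurableSet_Ioc (by simp)
          (Ioc_subset_Ioc hs (by linarith)) (by positivity) (by positivity)
          (fun τ hτ => unstable_rpow_le_of_mem_Ioc hgr hdiff hKμ hU hC (by linarith) hVQ hp
            (by linarith) hs hτ (hτ.2.trans hst) x) (hint t (by linarith) x)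
    _ = _ := by rw [show p * (ε + α) = p * ε + p * α by ring, rpow_add hμt]; ring

/-- The estimate \eqref{eq:maj-3} in the proof of Theorem 3.2: for `t ≥ s + 1`,
`‖U_Q(s,t)Q(t)x‖^p ≤ D M^p K_μ^{p-1} e^{K_μ(α+ω+γ)p} (μ(t)/μ(s))^{-p(γ+α)} μ(t)^{p(ε+α)} ‖x‖^p`. -/
theorem unstable_pointwise_estimate_far
    {X : Type*} [NormedAddCommGroup X] [NormedSpace ℝ X] [CompleteSpace X]
    (μ : ℝ → ℝ) (Kμ : ℝ) (hgr : IsGrowthRate μ)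
    (hdiff : ∀ t, 0 ≤ t → DifferentiableAt ℝ μ t)
    (hKμ : ∀ t, 0 ≤ t → deriv μ t / μ t ≤ Kμ)
    (U V : ℝ → ℝ → X →L[ℝ] X) (P : ℝ → X →L[ℝ] X)
    (hU : IsEvolutionOperator U) (hP : IsProjectionValued P)
    (hC : CompatibleProjection U V P)
    (M ω α : ℝ) (hω : 0 < ω) (hα : 0 ≤ α) (hM : 1 ≤ M)
    (hVQ : ∀ s t, 0 ≤ s → s < t →
      ‖(V s t).comp (1 - P t)‖ ≤ M * (deriv μ t / μ t) * (μ t / μ s) ^ ω * μ t ^ α)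
    (p γ ε D : ℝ) (hp : 1 ≤ p) (hγ : α < γ) (hε : 0 ≤ ε) (hD : 0 < D)
    (hint : ∀ t, 0 ≤ t → ∀ x : X,
      ∫⁻ τ in Set.Ioc (0 : ℝ) t, ENNReal.ofReal
          (deriv μ τ / μ τ * (μ t / μ τ) ^ (p * γ) * ‖V τ t ((1 - P t) x)‖ ^ p)
        ≤ ENNReal.ofReal (D * μ t ^ (p * ε) * ‖x‖ ^ p)) :
    ∀ s t, 0 ≤ s → s + 1 ≤ t → ∀ x : X,
      ‖V s t ((1 - P t) x)‖ ^ p ≤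
        D * M ^ p * Kμ ^ (p - 1) * Real.exp (Kμ * (α + ω + γ) * p) *
          (μ t / μ s) ^ (-(p * (γ + α))) * μ t ^ (p * (ε + α)) * ‖x‖ ^ p :=
  unstable_pointwise_estimate_far_general μ Kμ hgr hdiff hKμ U V P hU hC M ω α hω hα hM hVQ p γ ε D
    hp hγ hD hint
end
end

section
/- Let μ : [0,∞) → [1,∞) be a differentiable growth rate with K_μ := sup_{t ≥ 0} μ'(t)/μ(t) < +∞, and let U : Δ → B(X) be an evolution operator with compatible projection valued function P satisfying ‖U_Q(s,t)Q(t)‖ ≤ M (μ'(t)/μ(t)) (μ(t)/μ(s))^{ω} μ(t)^α for all t > s ≥ 0, for some ω > 0, α ≥ 0, M ≥ 1. Then for any γ > α, ε ≥ 0, for all s ≤ t < s+1 and x ∈ X: ‖U_Q(s,t)Q(t)x‖ ≤ M K_μ e^{K_μ(ω+γ+α)} (μ(t)/μ(s))^{−(γ+α)} μ(t)^{ε+α} ‖x‖. -/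
/-!
On a window `s < t ≤ s + 1` the bound `μ'/μ ≤ K_μ` on the logarithmic derivative gives
`μ(t)/μ(s) ≤ e^{K_μ}`, which turns the factor `(μ(t)/μ(s))^ω` of the hypothesis into
`e^{K_μ(ω+γ+α)} (μ(t)/μ(s))^{-(γ+α)}`. The hypothesis says nothing at `t = s`; there the bound
is the limit `u → s⁺` of the bounds at `u`, because
`U_Q(s,u)Q(u)x - Q(s)x = U_Q(s,u)Q(u)(Q(u)x - U(u,s)Q(s)x)`, the operators `U_Q(s,u)Q(u)` stay
bounded and `Q(u)x - U(u,s)Q(s)x → 0` by strong continuity.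
-/

open Real MeasureTheory Filter

noncomputable section

variable {X : Type*} [NormedAddCommGroup X] [NormedSpace ℝ X]

open Set Topology

theorem div_le_exp_mul_sub_of_deriv_div_le {f : ℝ → ℝ} {K s t : ℝ} (hst : s ≤ t)
    (hf : ∀ u ∈ Icc s t, DifferentiableAt ℝ f u) (hpos : ∀ u ∈ Icc s t, 0 < f u)
    (hK : ∀ u ∈ Icc s t, deriv f u / f u ≤ K) : f t / f s ≤ exp (K * (t - s)) := by
  have hderiv : ∀ u ∈ Icc s t,
      HasDerivAt (fun v => K * v - log (f v)) (K - deriv f u / f u) u := fun u hu =>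
    (((hasDerivAt_id u).const_mul K).sub
      ((hf u hu).hasDerivAt.log (hpos u hu).ne')).congr_deriv (by rw [mul_one])
  have hmono : MonotoneOn (fun v => K * v - log (f v)) (Icc s t) :=
    monotoneOn_of_hasDerivWithinAt_nonneg (convex_Icc s t)
      (fun u hu => (hderiv u hu).continuousAt.continuousWithinAt)
      (fun u hu => (hderiv u (interior_subset hu)).hasDerivWithinAt)
      (fun u hu => sub_nonneg.2 (hK u (interior_subset hu)))
  have hle := hmono (left_mem_Icc.2 hst) (right_mem_Icc.2 hst) hst
  have hs := hpos s (left_mem_Icc.2 hst)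
  have ht := hpos t (right_mem_Icc.2 hst)
  rw [← log_le_iff_le_exp (div_pos ht hs), log_div ht.ne' hs.ne']
  linarith

theorem rpow_mul_rpow_le_exp_mul {r m K ω β ε α : ℝ} (hr : 0 < r) (hrK : r ≤ exp K)
    (hm : 1 ≤ m) (hωβ : 0 ≤ ω + β) (hε : 0 ≤ ε) :
    r ^ ω * m ^ α ≤ exp (K * (ω + β)) * r ^ (-β) * m ^ (ε + α) := by
  have hsplit : r ^ ω = r ^ (ω + β) * r ^ (-β) := by
    rw [← rpow_add hr, add_neg_cancel_right]
  have hexp : r ^ (ω + β) ≤ exp (K * (ω + β)) := by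
    rw [exp_mul]
    exact rpow_le_rpow hr.le hrK hωβ
  rw [hsplit]
  gcongr
  linarith

namespace IsGrowthRate

variable {μ : ℝ → ℝ}

theorem pos_s11 (hμ : IsGrowthRate μ) {t : ℝ} (ht : 0 ≤ t) : 0 < μ t :=
  one_pos.trans_le (hμ.1 t ht)

theorem deriv_nonneg_s11 (hμ : IsGrowthRate μ) {t : ℝ} (ht : 0 < t) : 0 ≤ deriv μ t := by
  rw [← derivWithin_of_mem_nhds (Ici_mem_nhds ht)]
  exact hμ.2.1.derivWithin_nonneg

theorem div_le_exp_mul_sub (hμ : IsGrowthRate μ) {K : ℝ}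
    (hdiff : ∀ t, 0 ≤ t → DifferentiableAt ℝ μ t) (hK : ∀ t, 0 ≤ t → deriv μ t / μ t ≤ K)
    {s t : ℝ} (hs : 0 ≤ s) (hst : s ≤ t) : μ t / μ s ≤ exp (K * (t - s)) :=
  div_le_exp_mul_sub_of_deriv_div_le hst (fun u hu => hdiff u (hs.trans hu.1))
    (fun _ hu => hμ.pos_s11 (hs.trans hu.1)) (fun u hu => hK u (hs.trans hu.1))

end IsGrowthRate

section EvolutionOperator

variable {U V : ℝ → ℝ → X →L[ℝ] X} {P : ℝ → X →L[ℝ] X} {s t : ℝ}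

theorem IsEvolutionOperator.tendsto_apply_nhdsGE (hU : IsEvolutionOperator U) (hs : 0 ≤ s)
    (y : X) : Tendsto (fun u => U u s y) (𝓝[≥] s) (𝓝 y) := by
  have hpair : Tendsto (fun u => (u, s)) (𝓝[≥] s)
      (𝓝[{q : ℝ × ℝ | 0 ≤ q.2 ∧ q.2 ≤ q.1}] (s, s)) :=
    tendsto_nhdsWithin_iff.2
      ⟨(tendsto_id.mono_left nhdsWithin_le_nhds).prodMk_nhds tendsto_const_nhds,
        eventually_mem_nhdsWithin.mono fun _ hu => ⟨hs, hu⟩⟩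
  simpa [Function.comp_def, hU.1 s hs] using (hU.2.2 y (s, s) ⟨hs, le_rfl⟩).tendsto.comp hpair

theorem IsProjectionValued.compl_apply_compl (hP : IsProjectionValued P) (ht : 0 ≤ t) (x : X) :
    (1 - P t) ((1 - P t) x) = (1 - P t) x := by
  have hPP : P t (P t x) = P t x := DFunLike.congr_fun (hP.1 t ht) x
  simp [hPP]

theorem IsProjectionValued.tendsto_compl_apply_nhdsGE (hP : IsProjectionValued P) (hs : 0 ≤ s)
    (x : X) : Tendsto (fun u => (1 - P u) x) (𝓝[≥] s) (𝓝 ((1 - P s) x)) := by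
  have hcont := (hP.2 x s hs).tendsto.mono_left (nhdsWithin_mono s (Ici_subset_Ici.2 hs))
  simpa using tendsto_const_nhds.sub hcont

namespace CompatibleProjection

theorem compl_apply_evolution (hC : CompatibleProjection U V P) (hs : 0 ≤ s) (hst : s ≤ t)
    (y : X) : (1 - P t) (U t s y) = U t s ((1 - P s) y) := by
  have hcomm : P t (U t s y) = U t s (P s y) := DFunLike.congr_fun (hC.1 s t hs hst) y
  simp [hcomm]

theorem unstable_self_apply (hU : IsEvolutionOperator U) (hC : CompatibleProjection U V P)
    (hs : 0 ≤ s) (x : X) : V s s ((1 - P s) x) = (1 - P s) x := by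
  simpa [hU.1 s hs] using hC.2.2.2 s s hs le_rfl x

theorem unstable_apply_sub_eq (hP : IsProjectionValued P) (hC : CompatibleProjection U V P)
    (hs : 0 ≤ s) (hst : s ≤ t) (x : X) :
    V s t ((1 - P t) x) - (1 - P s) x =
      (V s t).comp (1 - P t) ((1 - P t) x - U t s ((1 - P s) x)) := by
  rw [ContinuousLinearMap.comp_apply, map_sub, hP.compl_apply_compl (hs.trans hst),
    hC.compl_apply_evolution hs hst, hP.compl_apply_compl hs, map_sub, hC.2.2.2 s t hs hst x]

theorem tendsto_unstable_nhdsGT (hU : IsEvolutionOperator U) (hP : IsProjectionValued P)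
    (hC : CompatibleProjection U V P) (hs : 0 ≤ s) {B : ℝ}
    (hB : ∀ᶠ u in 𝓝[>] s, ‖(V s u).comp (1 - P u)‖ ≤ B) (x : X) :
    Tendsto (fun u => V s u ((1 - P u) x)) (𝓝[>] s) (𝓝 ((1 - P s) x)) := by
  have hdefect : Tendsto (fun u => (1 - P u) x - U u s ((1 - P s) x)) (𝓝[>] s) (𝓝 0) := by
    simpa using ((hP.tendsto_compl_apply_nhdsGE hs x).sub
      (hU.tendsto_apply_nhdsGE hs ((1 - P s) x))).mono_left
        (nhdsWithin_mono s Ioi_subset_Ici_self)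
  rw [← tendsto_sub_nhds_zero_iff]
  refine squeeze_zero_norm' (a := fun u => B * ‖(1 - P u) x - U u s ((1 - P s) x)‖) ?_
    (by simpa using hdefect.norm.const_mul B)
  filter_upwards [hB, self_mem_nhdsWithin] with u hu hsu
  rw [hC.unstable_apply_sub_eq hP hs (le_of_lt hsu)]
  exact ContinuousLinearMap.le_of_opNorm_le _ hu _

theorem norm_compl_apply_le (hU : IsEvolutionOperator U) (hP : IsProjectionValued P)
    (hC : CompatibleProjection U V P) (hs : 0 ≤ s) {F : ℝ → ℝ}
    (hF : ContinuousWithinAt F (Ioi s) s)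
    (hbound : ∀ᶠ u in 𝓝[>] s, ‖(V s u).comp (1 - P u)‖ ≤ F u) (x : X) :
    ‖(1 - P s) x‖ ≤ F s * ‖x‖ := by
  have hB : ∀ᶠ u in 𝓝[>] s, ‖(V s u).comp (1 - P u)‖ ≤ F s + 1 := by
    filter_upwards [hbound, hF.eventually (eventually_lt_nhds (lt_add_one (F s)))]
      with u hu hFu
    exact hu.trans hFu.le
  refine le_of_tendsto_of_tendsto (hC.tendsto_unstable_nhdsGT hU hP hs hB x).norm
    (hF.tendsto.mul_const ‖x‖) ?_
  filter_upwards [hbound] with u hu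
  exact ContinuousLinearMap.le_of_opNorm_le _ hu x

end CompatibleProjection

end EvolutionOperator

theorem unstable_pointwise_estimate_near_general
    {X : Type*} [NormedAddCommGroup X] [NormedSpace ℝ X]
    (μ : ℝ → ℝ) (Kμ : ℝ) (hgr : IsGrowthRate μ)
    (hdiff : ∀ t, 0 ≤ t → DifferentiableAt ℝ μ t)
    (hKμ : ∀ t, 0 ≤ t → deriv μ t / μ t ≤ Kμ)
    (U V : ℝ → ℝ → X →L[ℝ] X) (P : ℝ → X →L[ℝ] X)
    (hU : IsEvolutionOperator U) (hP : IsProjectionValued P)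
    (hC : CompatibleProjection U V P)
    (M ω α : ℝ) (hω : 0 < ω) (hα : 0 ≤ α) (hM : 1 ≤ M)
    (hVQ : ∀ s t, 0 ≤ s → s < t →
      ‖(V s t).comp (1 - P t)‖ ≤ M * (deriv μ t / μ t) * (μ t / μ s) ^ ω * μ t ^ α)
    (γ ε : ℝ) (hγ : α < γ) (hε : 0 ≤ ε) :
    ∀ s t, 0 ≤ s → s ≤ t → t < s + 1 → ∀ x : X,
      ‖V s t ((1 - P t) x)‖ ≤
        M * Kμ * Real.exp (Kμ * (ω + γ + α)) *
          (μ t / μ s) ^ (-(γ + α)) * μ t ^ (ε + α) * ‖x‖ := by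
  intro s t hs hst hts x
  have hK0 : 0 ≤ Kμ := (div_nonneg (hgr.deriv_nonneg_s11 one_pos) (hgr.pos_s11 zero_le_one).le).trans
    (hKμ 1 zero_le_one)
  set F : ℝ → ℝ := fun u =>
    M * Kμ * exp (Kμ * (ω + γ + α)) * (μ u / μ s) ^ (-(γ + α)) * μ u ^ (ε + α) with hF
  have hnear : ∀ u ∈ Ioc s (s + 1), ‖(V s u).comp (1 - P u)‖ ≤ F u := by
    rintro u ⟨hsu, hu⟩
    have hu0 : 0 ≤ u := hs.trans hsu.le
    have hr : 0 < μ u / μ s := div_pos (hgr.pos_s11 hu0) (hgr.pos_s11 hs)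
    have hratio : μ u / μ s ≤ exp Kμ := (hgr.div_le_exp_mul_sub hdiff hKμ hs hsu.le).trans
      (exp_le_exp.2 (mul_le_of_le_one_right hK0 (by linarith)))
    calc ‖(V s u).comp (1 - P u)‖
        ≤ M * (deriv μ u / μ u) * ((μ u / μ s) ^ ω * μ u ^ α) := by
          simpa only [mul_assoc] using hVQ s u hs hsu
      _ ≤ M * Kμ * (exp (Kμ * (ω + (γ + α))) * (μ u / μ s) ^ (-(γ + α)) * μ u ^ (ε + α)) :=
          mul_le_mul (mul_le_mul_of_nonneg_left (hKμ u hu0) (by linarith))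
            (rpow_mul_rpow_le_exp_mul hr hratio (hgr.1 u hu0) (by linarith) hε)
            (mul_nonneg (rpow_nonneg hr.le _) (rpow_nonneg (hgr.pos_s11 hu0).le _))
            (mul_nonneg (by linarith) hK0)
      _ = F u := by simp only [hF, add_assoc]; ring
  rcases hst.eq_or_lt with rfl | hlt
  · have hμ : ContinuousAt μ s := (hdiff s hs).continuousAt
    have hFs : ContinuousAt F s := by fun_prop (disch := simp [(hgr.pos_s11 hs).ne'])
    rw [hC.unstable_self_apply hU hs]
    refine hC.norm_compl_apply_le hU hP hs hFs.continuousWithinAt ?_ x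
    filter_upwards [Ioc_mem_nhdsGT (lt_add_one s)] using hnear
  · exact ContinuousLinearMap.le_of_opNorm_le _ (hnear t ⟨hlt, hts.le⟩) x

/-- The estimate \eqref{eq:maj-4} in the proof of Theorem 3.2: for `s ≤ t < s + 1`,
`‖U_Q(s,t)Q(t)x‖ ≤ M K_μ e^{K_μ(ω+γ+α)} (μ(t)/μ(s))^{-(γ+α)} μ(t)^{ε+α} ‖x‖`. -/
theorem unstable_pointwise_estimate_near
    {X : Type*} [NormedAddCommGroup X] [NormedSpace ℝ X] [CompleteSpace X]
    (μ : ℝ → ℝ) (Kμ : ℝ) (hgr : IsGrowthRate μ)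
    (hdiff : ∀ t, 0 ≤ t → DifferentiableAt ℝ μ t)
    (hKμ : ∀ t, 0 ≤ t → deriv μ t / μ t ≤ Kμ)
    (U V : ℝ → ℝ → X →L[ℝ] X) (P : ℝ → X →L[ℝ] X)
    (hU : IsEvolutionOperator U) (hP : IsProjectionValued P)
    (hC : CompatibleProjection U V P)
    (M ω α : ℝ) (hω : 0 < ω) (hα : 0 ≤ α) (hM : 1 ≤ M)
    (hVQ : ∀ s t, 0 ≤ s → s < t →
      ‖(V s t).comp (1 - P t)‖ ≤ M * (deriv μ t / μ t) * (μ t / μ s) ^ ω * μ t ^ α)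
    (γ ε : ℝ) (hγ : α < γ) (hε : 0 ≤ ε) :
    ∀ s t, 0 ≤ s → s ≤ t → t < s + 1 → ∀ x : X,
      ‖V s t ((1 - P t) x)‖ ≤
        M * Kμ * Real.exp (Kμ * (ω + γ + α)) *
          (μ t / μ s) ^ (-(γ + α)) * μ t ^ (ε + α) * ‖x‖ :=
  unstable_pointwise_estimate_near_general μ Kμ hgr hdiff hKμ U V P hU hP hC M ω α hω hα hM hVQ γ ε
    hγ hε
end
end

section
/- Let U : Δ → B(X) be an evolution operator and P a projection valued function compatible with U such that ‖G(t,s)‖ ≤ M e^{αs} e^{ω|t−s|} for all t,s ≥ 0 with t ≠ s, for some ω > 0, α ≥ 0 and M ≥ 1. If there exist p ≥ 1, γ > α, ε ≥ 0 and D > 0 such that ∫₀^{+∞} e^{pγ|τ−t|·sign(τ−t)·sign(τ−t)} ‖G(τ,t)x‖^p dτ = ∫₀^{+∞} e^{pγ(τ−t)sign(τ−t)} ‖G(τ,t)x‖^p dτ ≤ D e^{pεt} ‖x‖^p for every t ≥ 0 and x ∈ X, then U has a nonuniform exponential dichotomy with projection valued function P, i.e. there exist ã,b̃ > 0, ε̃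 ≥ 0 and N₁,N₂ ≥ 1 with ‖U(t,s)P(s)‖ ≤ N₁ e^{−ã(t−s)} e^{ε̃s} and ‖U_Q(s,t)Q(t)‖ ≤ N₂ e^{−b̃(t−s)} e^{ε̃t} for all t ≥ s ≥ 0. -/
open Real MeasureTheory Filter

noncomputable section

variable {X : Type*} [NormedAddCommGroup X] [NormedSpace ℝ X]

/-!
For `s < τ < t` the Green function factors as `U(t,s)P(s) = G(t,τ)G(τ,s)` and
`U_Q(s,t)Q(t) = G(s,τ)G(τ,t)`. When `t - s ≥ 1`, letting `τ` range over a unit interval next to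
`t` (resp. `s`) bounds the outer factor by `M e^ω e^{αt}`, while the weight of the integral
hypothesis is at least `e^{pγ(t - s - 1)}` there. Integrating over that interval gives decay at
rate `γ - α` on the stable part and `γ` on the unstable part, with nonuniform factor
`e^{(α + ε)s}` (resp. `e^{(α + ε)t}`). When `t - s ≤ 1` the growth bound on `G` suffices, with
`P(s)` controlled as the strong limit of `U(t,s)P(s)` as `t ↓ s`.
-/

open Topology

def HasGreenGrowthBound (U V : ℝ → ℝ → X →L[ℝ] X) (P : ℝ → X →L[ℝ] X) (M α ω : ℝ) : Prop :=
  ∀ t s, 0 ≤ t → 0 ≤ s → t ≠ s →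
    ‖greenFunction U V P t s‖ ≤ M * exp (α * s) * exp (ω * |t - s|)

def HasGreenIntegralBound (U V : ℝ → ℝ → X →L[ℝ] X) (P : ℝ → X →L[ℝ] X) (p γ ε D : ℝ) :
    Prop :=
  ∀ t, 0 ≤ t → ∀ x : X,
    ∫⁻ τ in Set.Ioi (0 : ℝ),
        ENNReal.ofReal (exp (p * γ * |τ - t|) * ‖greenFunction U V P τ t x‖ ^ p)
      ≤ ENNReal.ofReal (D * exp (p * ε * t) * ‖x‖ ^ p)

theorem le_of_forall_Ioo_le_of_setLIntegral_Ioi_le {f : ℝ → ENNReal} {u c R : ℝ} (hu : 0 ≤ u)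
    (hR : 0 ≤ R) (hc : ∀ τ ∈ Set.Ioo u (u + 1), ENNReal.ofReal c ≤ f τ)
    (h : ∫⁻ τ in Set.Ioi 0, f τ ≤ ENNReal.ofReal R) : c ≤ R := by
  have hIoo : ∫⁻ _ in Set.Ioo u (u + 1), ENNReal.ofReal c ≤ ∫⁻ τ in Set.Ioo u (u + 1), f τ :=
    setLIntegral_mono' measurableSet_Ioo hc
  rw [setLIntegral_const, Real.volume_Ioo, add_sub_cancel_left, ENNReal.ofReal_one, mul_one]
    at hIoo
  have hsub : Set.Ioo u (u + 1) ⊆ Set.Ioi 0 := fun τ hτ => hu.trans_lt hτ.1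
  exact (ENNReal.ofReal_le_ofReal_iff hR).1 (hIoo.trans ((lintegral_mono_set hsub).trans h))

theorem le_mul_exp_of_setLIntegral_le {g : ℝ → ℝ} {p γ ε r u d L K D R : ℝ} (hp : 0 < p)
    (hγ : 0 ≤ γ) (hu : 0 ≤ u) (hL : 0 ≤ L) (hK : 0 < K) (hD : 0 ≤ D) (hR : 0 ≤ R)
    (hLg : ∀ τ ∈ Set.Ioo u (u + 1), L ≤ K * g τ) (hd : ∀ τ ∈ Set.Ioo u (u + 1), d ≤ |τ - r|)
    (hint : ∫⁻ τ in Set.Ioi 0, ENNReal.ofReal (exp (p * γ * |τ - r|) * g τ ^ p)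
      ≤ ENNReal.ofReal (D * exp (p * ε * r) * R ^ p)) :
    L ≤ K * D ^ (1 / p) * exp (ε * r - γ * d) * R := by
  have hpointwise : ∀ τ ∈ Set.Ioo u (u + 1),
      exp (p * γ * d) * (L / K) ^ p ≤ exp (p * γ * |τ - r|) * g τ ^ p := by
    intro τ hτ
    have hLK : L / K ≤ g τ := (div_le_iff₀' hK).2 (hLg τ hτ)
    gcongr
    exact hd τ hτ
  have hpow : (exp (γ * d) * (L / K)) ^ p ≤ (D ^ (1 / p) * exp (ε * r) * R) ^ p := by
    have h := le_of_forall_Ioo_le_of_setLIntegral_Ioi_le hu (by positivity)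
      (fun τ hτ => ENNReal.ofReal_le_ofReal (hpointwise τ hτ)) hint
    rw [mul_rpow (exp_pos _).le (by positivity), mul_rpow (by positivity) hR,
      mul_rpow (by positivity) (exp_pos _).le, ← rpow_mul hD, one_div_mul_cancel hp.ne',
      rpow_one, ← exp_mul, ← exp_mul]
    convert h using 3 <;> ring_nf
  have hbase := (rpow_le_rpow_iff (by positivity) (by positivity) hp).1 hpow
  calc L = K * (exp (γ * d) * (L / K)) / exp (γ * d) := by field_simp
    _ ≤ K * (D ^ (1 / p) * exp (ε * r) * R) / exp (γ * d) := by gcongr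
    _ = K * D ^ (1 / p) * exp (ε * r - γ * d) * R := by rw [exp_sub]; ring

section

variable {U V : ℝ → ℝ → X →L[ℝ] X} {P : ℝ → X →L[ℝ] X} {M α ω p γ ε D s τ t : ℝ}

theorem greenFunction_of_lt (h : s < t) : greenFunction U V P t s = (U t s).comp (P s) := by
  simp [greenFunction, h]

theorem greenFunction_of_gt (h : t < s) :
    greenFunction U V P t s = -((V t s).comp (1 - P s)) := by
  simp [greenFunction, h, h.not_gt]

theorem IsEvolutionOperator.tendsto_nhdsGT (hU : IsEvolutionOperator U) (hs : 0 ≤ s) (y : X) :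
    Tendsto (fun t => U t s y) (𝓝[>] s) (𝓝 y) := by
  have hpair : Tendsto (fun t => (t, s)) (𝓝[>] s)
      (𝓝[{q : ℝ × ℝ | 0 ≤ q.2 ∧ q.2 ≤ q.1}] (s, s)) :=
    tendsto_nhdsWithin_iff.2
      ⟨((continuous_id.prodMk continuous_const).tendsto s).mono_left nhdsWithin_le_nhds,
        eventually_nhdsWithin_of_forall fun t ht => ⟨hs, ht.le⟩⟩
  simpa [Function.comp_def, hU.1 s hs] using
    ((hU.2.2 y (s, s) ⟨hs, le_rfl⟩).tendsto.comp hpair)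

theorem CompatibleProjection.eq_of_apply_eq (hC : CompatibleProjection U V P) (hs : 0 ≤ s)
    (hst : s ≤ t) {y z : X} (hy : (1 - P s) y = y) (hz : (1 - P s) z = z)
    (h : U t s y = U t s z) : y = z := by
  rw [← hy, ← hC.2.2.2 s t hs hst y, hy, h, ← hz, hC.2.2.2 s t hs hst z]

theorem greenFunction_comp_greenFunction_eq_stable (hU : IsEvolutionOperator U)
    (hP : IsProjectionValued P) (hC : CompatibleProjection U V P) (hs : 0 ≤ s) (hsτ : s < τ)
    (hτt : τ < t) :
    (greenFunction U V P t τ).comp (greenFunction U V P τ s) = (U t s).comp (P s) := by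
  rw [greenFunction_of_lt hτt, greenFunction_of_lt hsτ]
  calc (U t τ ∘L P τ) ∘L (U τ s ∘L P s) = U t τ ∘L (P τ ∘L U τ s) ∘L P s := rfl
    _ = (U t τ ∘L U τ s) ∘L (P s ∘L P s) := by rw [hC.1 s τ hs hsτ.le]; rfl
    _ = U t s ∘L P s := by rw [hU.2.1 s τ t hs hsτ.le hτt.le, hP.1 s hs]

theorem greenFunction_comp_greenFunction_eq_unstable (hU : IsEvolutionOperator U)
    (hC : CompatibleProjection U V P) (hs : 0 ≤ s) (hsτ : s < τ) (hτt : τ < t) :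
    (greenFunction U V P s τ).comp (greenFunction U V P τ t) = (V s t).comp (1 - P t) := by
  have hτ : 0 ≤ τ := hs.trans hsτ.le
  ext x
  set w := V τ t ((1 - P t) x)
  have hw : (1 - P τ) w = w := hC.2.1 τ t hτ hτt.le x
  have hst : s ≤ t := (hsτ.trans hτt).le
  have hU_eq : U t s (V s τ ((1 - P τ) w)) = (1 - P t) x := by
    rw [← hU.2.1 s τ t hs hsτ.le hτt.le, ContinuousLinearMap.comp_apply,
      hC.2.2.1 s τ hs hsτ.le, hw, hC.2.2.1 τ t hτ hτt.le]
  have hV_eq : V s τ ((1 - P τ) w) = V s t ((1 - P t) x) :=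
    hC.eq_of_apply_eq hs hst (hC.2.1 s τ hs hsτ.le _) (hC.2.1 s t hs hst x)
      (by rw [hU_eq, hC.2.2.1 s t hs hst])
  simpa only [ContinuousLinearMap.comp_apply, greenFunction_of_gt hsτ, greenFunction_of_gt hτt,
    neg_apply, map_neg, neg_neg] using hV_eq


theorem norm_greenFunction_le_of_abs_sub_le_one (hG : HasGreenGrowthBound U V P M α ω)
    (hM : 0 ≤ M) (hα : 0 ≤ α) (hω : 0 ≤ ω) {T : ℝ} (ht : 0 ≤ t) (hs : 0 ≤ s) (hts : t ≠ s)
    (h1 : |t - s| ≤ 1) (hsT : s ≤ T) :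
    ‖greenFunction U V P t s‖ ≤ M * exp ω * exp (α * T) := by
  calc ‖greenFunction U V P t s‖ ≤ M * exp (α * s) * exp (ω * |t - s|) := hG t s ht hs hts
    _ ≤ M * exp (α * T) * exp ω := by
      gcongr
      exact mul_le_of_le_one_right hω h1
    _ = M * exp ω * exp (α * T) := by ring

theorem norm_stable_le_of_le_add_one (hU : IsEvolutionOperator U)
    (hG : HasGreenGrowthBound U V P M α ω) (hM : 0 ≤ M) (hα : 0 ≤ α) (hω : 0 ≤ ω) (hs : 0 ≤ s)
    (hst : s ≤ t) (ht : t ≤ s + 1) : ‖(U t s).comp (P s)‖ ≤ M * exp ω * exp (α * s) := by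
  have hlt : ∀ t, s < t → t ≤ s + 1 → ‖(U t s).comp (P s)‖ ≤ M * exp ω * exp (α * s) := by
    intro t hst ht
    rw [← greenFunction_of_lt (V := V) hst]
    exact norm_greenFunction_le_of_abs_sub_le_one hG hM hα hω (hs.trans hst.le) hs hst.ne'
      (by rw [abs_of_pos (sub_pos.2 hst)]; linarith) le_rfl
  rcases hst.lt_or_eq with hst | rfl
  · exact hlt t hst ht
  rw [hU.1 s hs, ContinuousLinearMap.one_def, ContinuousLinearMap.id_comp]
  refine ContinuousLinearMap.opNorm_le_bound _ (by positivity) fun x => ?_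
  refine le_of_tendsto (hU.tendsto_nhdsGT hs (P s x)).norm ?_
  filter_upwards [Ioo_mem_nhdsGT (lt_add_one s)] with t ht
  exact ((U t s).comp (P s)).le_of_opNorm_le (hlt t ht.1 ht.2.le) x

theorem norm_unstable_le_of_le_add_one (hU : IsEvolutionOperator U)
    (hC : CompatibleProjection U V P) (hG : HasGreenGrowthBound U V P M α ω) (hM : 0 ≤ M)
    (hα : 0 ≤ α) (hω : 0 ≤ ω) (hs : 0 ≤ s) (hst : s ≤ t) (ht : t ≤ s + 1) :
    ‖(V s t).comp (1 - P t)‖ ≤ (1 + M * exp ω) * exp (α * t) := by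
  have h1 : 1 ≤ exp (α * t) := one_le_exp (mul_nonneg hα (hs.trans hst))
  rcases hst.lt_or_eq with hst | rfl
  · rw [← norm_neg, ← greenFunction_of_gt hst]
    calc ‖greenFunction U V P s t‖ ≤ M * exp ω * exp (α * t) :=
          norm_greenFunction_le_of_abs_sub_le_one hG hM hα hω hs (hs.trans hst.le) hst.ne
            (by rw [abs_sub_comm, abs_of_pos (sub_pos.2 hst)]; linarith) le_rfl
      _ ≤ (1 + M * exp ω) * exp (α * t) := by nlinarith
  have hVQ : (V s s).comp (1 - P s) = 1 - P s := by
    ext x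
    simpa [hU.1 s hs] using hC.2.2.2 s s hs le_rfl x
  have hP := norm_stable_le_of_le_add_one (V := V) hU hG hM hα hω hs le_rfl (by linarith)
  rw [hU.1 s hs, ContinuousLinearMap.one_def, ContinuousLinearMap.id_comp] at hP
  calc ‖(V s s).comp (1 - P s)‖ ≤ ‖(1 : X →L[ℝ] X)‖ + ‖P s‖ := by
          rw [hVQ]; exact norm_sub_le _ _
    _ ≤ 1 + M * exp ω * exp (α * s) := add_le_add ContinuousLinearMap.norm_id_le hP
    _ ≤ (1 + M * exp ω) * exp (α * s) := by nlinarith [exp_pos ω]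

theorem norm_stable_apply_le_of_add_one_le (hU : IsEvolutionOperator U)
    (hP : IsProjectionValued P) (hC : CompatibleProjection U V P)
    (hG : HasGreenGrowthBound U V P M α ω) (hint : HasGreenIntegralBound U V P p γ ε D)
    (hM : 0 < M) (hα : 0 ≤ α) (hω : 0 ≤ ω) (hp : 0 < p) (hγ : 0 ≤ γ) (hD : 0 ≤ D) (hs : 0 ≤ s)
    (hst : s + 1 ≤ t) (x : X) :
    ‖U t s (P s x)‖ ≤ M * exp ω * exp γ * D ^ (1 / p) * exp (-((γ - α) * (t - s))) *
      exp ((α + ε) * s) * ‖x‖ := by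
  have hLg : ∀ τ ∈ Set.Ioo (t - 1) (t - 1 + 1),
      ‖U t s (P s x)‖ ≤ M * exp ω * exp (α * t) * ‖greenFunction U V P τ s x‖ := by
    rintro τ ⟨hτ₁, hτ₂⟩
    rw [sub_add_cancel] at hτ₂
    have hsτ : s < τ := by linarith
    calc ‖U t s (P s x)‖ = ‖greenFunction U V P t τ (greenFunction U V P τ s x)‖ := by
          rw [← ContinuousLinearMap.comp_apply,
            ← greenFunction_comp_greenFunction_eq_stable hU hP hC hs hsτ hτ₂,
            ContinuousLinearMap.comp_apply]
      _ ≤ ‖greenFunction U V P t τ‖ * ‖greenFunction U V P τ s x‖ :=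
          ContinuousLinearMap.le_opNorm _ _
      _ ≤ _ := by
        gcongr
        exact norm_greenFunction_le_of_abs_sub_le_one hG hM.le hα hω (by linarith) (by linarith)
          hτ₂.ne' (by rw [abs_of_pos (sub_pos.2 hτ₂)]; linarith) hτ₂.le
  have hd : ∀ τ ∈ Set.Ioo (t - 1) (t - 1 + 1), t - 1 - s ≤ |τ - s| := by
    rintro τ ⟨hτ₁, -⟩
    rw [abs_of_pos (by linarith)]
    linarith
  calc ‖U t s (P s x)‖
      ≤ M * exp ω * exp (α * t) * D ^ (1 / p) * exp (ε * s - γ * (t - 1 - s)) * ‖x‖ :=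
        le_mul_exp_of_setLIntegral_le hp hγ (by linarith) (norm_nonneg _) (by positivity) hD
          (norm_nonneg x) hLg hd (hint s hs x)
    _ = M * exp ω * D ^ (1 / p) * exp (α * t + (ε * s - γ * (t - 1 - s))) * ‖x‖ := by
        rw [exp_add]; ring
    _ = _ := by
        rw [show α * t + (ε * s - γ * (t - 1 - s)) = γ + -((γ - α) * (t - s)) + (α + ε) * s by
          ring, exp_add, exp_add]
        ring

theorem norm_unstable_apply_le_of_add_one_le (hU : IsEvolutionOperator U)
    (hC : CompatibleProjection U V P)
    (hG : HasGreenGrowthBound U V P M α ω) (hint : HasGreenIntegralBound U V P p γ ε D)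
    (hM : 0 < M) (hα : 0 ≤ α) (hω : 0 ≤ ω) (hp : 0 < p) (hγ : 0 ≤ γ) (hD : 0 ≤ D) (hs : 0 ≤ s)
    (hst : s + 1 ≤ t) (x : X) :
    ‖V s t ((1 - P t) x)‖ ≤ M * exp ω * exp γ * D ^ (1 / p) * exp (-(γ * (t - s))) *
      exp ((α + ε) * t) * ‖x‖ := by
  have hLg : ∀ τ ∈ Set.Ioo s (s + 1),
      ‖V s t ((1 - P t) x)‖ ≤ M * exp ω * exp (α * t) * ‖greenFunction U V P τ t x‖ := by
    rintro τ ⟨hsτ, hτ₂⟩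
    have hτt : τ < t := by linarith
    calc ‖V s t ((1 - P t) x)‖ = ‖greenFunction U V P s τ (greenFunction U V P τ t x)‖ := by
          rw [← ContinuousLinearMap.comp_apply,
            ← greenFunction_comp_greenFunction_eq_unstable hU hC hs hsτ hτt,
            ContinuousLinearMap.comp_apply]
      _ ≤ ‖greenFunction U V P s τ‖ * ‖greenFunction U V P τ t x‖ :=
          ContinuousLinearMap.le_opNorm _ _
      _ ≤ _ := by
        gcongr
        exact norm_greenFunction_le_of_abs_sub_le_one hG hM.le hα hω hs (by linarith)
          hsτ.ne (by rw [abs_sub_comm, abs_of_pos (sub_pos.2 hsτ)]; linarith) hτt.le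
  have hd : ∀ τ ∈ Set.Ioo s (s + 1), t - s - 1 ≤ |τ - t| := by
    rintro τ ⟨-, hτ₂⟩
    rw [abs_sub_comm, abs_of_pos (by linarith)]
    linarith
  calc ‖V s t ((1 - P t) x)‖
      ≤ M * exp ω * exp (α * t) * D ^ (1 / p) * exp (ε * t - γ * (t - s - 1)) * ‖x‖ :=
        le_mul_exp_of_setLIntegral_le hp hγ hs (norm_nonneg _) (by positivity) hD
          (norm_nonneg x) hLg hd (hint t (by linarith) x)
    _ = M * exp ω * D ^ (1 / p) * exp (α * t + (ε * t - γ * (t - s - 1))) * ‖x‖ := by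
        rw [exp_add]; ring
    _ = _ := by
        rw [show α * t + (ε * t - γ * (t - s - 1)) = γ + -(γ * (t - s)) + (α + ε) * t by
          ring, exp_add, exp_add]
        ring

theorem norm_stable_le (hU : IsEvolutionOperator U) (hP : IsProjectionValued P)
    (hC : CompatibleProjection U V P) (hG : HasGreenGrowthBound U V P M α ω)
    (hint : HasGreenIntegralBound U V P p γ ε D) (hM : 0 < M) (hα : 0 ≤ α) (hω : 0 ≤ ω)
    (hp : 0 < p) (hαγ : α ≤ γ) (hε : 0 ≤ ε) (hD : 0 ≤ D) (hs : 0 ≤ s) (hst : s ≤ t) :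
    ‖(U t s).comp (P s)‖ ≤ (1 + M * exp ω) * max 1 (D ^ (1 / p)) * exp γ *
      exp (-((γ - α) * (t - s))) * exp ((α + ε) * s) := by
  rcases le_or_gt t (s + 1) with hts | hts
  · have hexp : exp (α * s) ≤ exp γ * exp (-((γ - α) * (t - s))) * exp ((α + ε) * s) := by
      rw [← exp_add, ← exp_add, exp_le_exp]
      nlinarith
    calc ‖(U t s).comp (P s)‖ ≤ M * exp ω * exp (α * s) :=
          norm_stable_le_of_le_add_one hU hG hM.le hα hω hs hst hts
      _ ≤ M * exp ω * exp γ * exp (-((γ - α) * (t - s))) * exp ((α + ε) * s) := by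
          rw [mul_assoc (M * exp ω), mul_assoc (M * exp ω)]
          gcongr
      _ ≤ _ := by
          gcongr ?_ * exp γ * _ * _
          exact (le_add_of_nonneg_left zero_le_one).trans
            (le_mul_of_one_le_right (by positivity) (le_max_left _ _))
  · refine ContinuousLinearMap.opNorm_le_bound _ (by positivity) fun x => ?_
    calc ‖(U t s).comp (P s) x‖ ≤ M * exp ω * exp γ * D ^ (1 / p) *
          exp (-((γ - α) * (t - s))) * exp ((α + ε) * s) * ‖x‖ :=
          norm_stable_apply_le_of_add_one_le hU hP hC hG hint hM hα hω hp (hα.trans hαγ) hD hs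
            hts.le x
      _ ≤ _ := by
          rw [mul_right_comm (M * exp ω) (exp γ)]
          gcongr
          · linarith
          · exact le_max_right _ _

theorem norm_unstable_le (hU : IsEvolutionOperator U) (hC : CompatibleProjection U V P)
    (hG : HasGreenGrowthBound U V P M α ω) (hint : HasGreenIntegralBound U V P p γ ε D)
    (hM : 0 < M) (hα : 0 ≤ α) (hω : 0 ≤ ω) (hp : 0 < p) (hγ : 0 ≤ γ) (hε : 0 ≤ ε) (hD : 0 ≤ D)
    (hs : 0 ≤ s) (hst : s ≤ t) :
    ‖(V s t).comp (1 - P t)‖ ≤ (1 + M * exp ω) * max 1 (D ^ (1 / p)) * exp γ *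
      exp (-(γ * (t - s))) * exp ((α + ε) * t) := by
  rcases le_or_gt t (s + 1) with hts | hts
  · have hexp : exp (α * t) ≤ exp γ * exp (-(γ * (t - s))) * exp ((α + ε) * t) := by
      rw [← exp_add, ← exp_add, exp_le_exp]
      nlinarith
    calc ‖(V s t).comp (1 - P t)‖ ≤ (1 + M * exp ω) * exp (α * t) :=
          norm_unstable_le_of_le_add_one hU hC hG hM.le hα hω hs hst hts
      _ ≤ (1 + M * exp ω) * 1 * exp γ * exp (-(γ * (t - s))) * exp ((α + ε) * t) := by
          rw [mul_one, mul_assoc (1 + M * exp ω), mul_assoc (1 + M * exp ω)]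
          gcongr
      _ ≤ _ := by
          gcongr
          exact le_max_left _ _
  · refine ContinuousLinearMap.opNorm_le_bound _ (by positivity) fun x => ?_
    calc ‖(V s t).comp (1 - P t) x‖ ≤ M * exp ω * exp γ * D ^ (1 / p) *
          exp (-(γ * (t - s))) * exp ((α + ε) * t) * ‖x‖ :=
          norm_unstable_apply_le_of_add_one_le hU hC hG hint hM hα hω hp hγ hD hs hts.le x
      _ ≤ _ := by
          rw [mul_right_comm (M * exp ω) (exp γ)]
          gcongr
          · linarith
          · exact le_max_right _ _

end

theorem integral_estimate_implies_exponential_dichotomy_general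
    {X : Type*} [NormedAddCommGroup X] [NormedSpace ℝ X]
    (U V : ℝ → ℝ → X →L[ℝ] X) (P : ℝ → X →L[ℝ] X)
    (hU : IsEvolutionOperator U) (hP : IsProjectionValued P)
    (hC : CompatibleProjection U V P)
    (M ω α : ℝ) (hω : 0 < ω) (hα : 0 ≤ α) (hM : 1 ≤ M)
    (hG : ∀ t s, 0 ≤ t → 0 ≤ s → t ≠ s →
      ‖greenFunction U V P t s‖ ≤ M * Real.exp (α * s) * Real.exp (ω * |t - s|))
    (p γ ε D : ℝ) (hp : 1 ≤ p) (hγ : α < γ) (hε : 0 ≤ ε) (hD : 0 < D)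
    (hint : ∀ t, 0 ≤ t → ∀ x : X,
      ∫⁻ τ in Set.Ioi (0 : ℝ), ENNReal.ofReal
          (Real.exp (p * γ * |τ - t|) * ‖greenFunction U V P τ t x‖ ^ p)
        ≤ ENNReal.ofReal (D * Real.exp (p * ε * t) * ‖x‖ ^ p)) :
    ∃ a b ε' N₁ N₂ : ℝ, 0 < a ∧ 0 < b ∧ 0 ≤ ε' ∧ 1 ≤ N₁ ∧ 1 ≤ N₂ ∧
      ∀ s t, 0 ≤ s → s ≤ t →
        ‖(U t s).comp (P s)‖ ≤ N₁ * Real.exp (-(a * (t - s))) * Real.exp (ε' * s) ∧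
        ‖(V s t).comp (1 - P t)‖ ≤ N₂ * Real.exp (-(b * (t - s))) * Real.exp (ε' * t) := by
  have hM₀ : 0 < M := zero_lt_one.trans_le hM
  have hp₀ : 0 < p := zero_lt_one.trans_le hp
  have hγ₀ : 0 < γ := hα.trans_lt hγ
  have hN : 1 ≤ (1 + M * exp ω) * max 1 (D ^ (1 / p)) * exp γ :=
    one_le_mul_of_one_le_of_one_le
      (one_le_mul_of_one_le_of_one_le (le_add_of_nonneg_right (by positivity)) (le_max_left _ _))
      (one_le_exp hγ₀.le)
  exact ⟨γ - α, γ, α + ε, _, _, sub_pos.2 hγ, hγ₀, by positivity, hN, hN, fun s t hs hst =>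
    ⟨norm_stable_le hU hP hC hG hint hM₀ hα hω.le hp₀ hγ.le hε hD.le hs hst,
      norm_unstable_le hU hC hG hint hM₀ hα hω.le hp₀ hγ₀.le hε hD.le hs hst⟩⟩

/-- Corollary 3.3 (the exponential case `μ(t) = e^t`, Theorem 1 of Lupa–Megan): if
`‖G(t,s)‖ ≤ M e^{αs} e^{ω|t-s|}` for `t ≠ s` and
`∫₀^∞ e^{pγ|τ-t|} ‖G(τ,t)x‖^p dτ ≤ D e^{pεt} ‖x‖^p`, then `U` has a nonuniform
exponential dichotomy with projection valued function `P`. -/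
theorem integral_estimate_implies_exponential_dichotomy
    {X : Type*} [NormedAddCommGroup X] [NormedSpace ℝ X] [CompleteSpace X]
    (U V : ℝ → ℝ → X →L[ℝ] X) (P : ℝ → X →L[ℝ] X)
    (hU : IsEvolutionOperator U) (hP : IsProjectionValued P)
    (hC : CompatibleProjection U V P)
    (M ω α : ℝ) (hω : 0 < ω) (hα : 0 ≤ α) (hM : 1 ≤ M)
    (hG : ∀ t s, 0 ≤ t → 0 ≤ s → t ≠ s →
      ‖greenFunction U V P t s‖ ≤ M * Real.exp (α * s) * Real.exp (ω * |t - s|))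
    (p γ ε D : ℝ) (hp : 1 ≤ p) (hγ : α < γ) (hε : 0 ≤ ε) (hD : 0 < D)
    (hint : ∀ t, 0 ≤ t → ∀ x : X,
      ∫⁻ τ in Set.Ioi (0 : ℝ), ENNReal.ofReal
          (Real.exp (p * γ * |τ - t|) * ‖greenFunction U V P τ t x‖ ^ p)
        ≤ ENNReal.ofReal (D * Real.exp (p * ε * t) * ‖x‖ ^ p)) :
    ∃ a b ε' N₁ N₂ : ℝ, 0 < a ∧ 0 < b ∧ 0 ≤ ε' ∧ 1 ≤ N₁ ∧ 1 ≤ N₂ ∧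
      ∀ s t, 0 ≤ s → s ≤ t →
        ‖(U t s).comp (P s)‖ ≤ N₁ * Real.exp (-(a * (t - s))) * Real.exp (ε' * s) ∧
        ‖(V s t).comp (1 - P t)‖ ≤ N₂ * Real.exp (-(b * (t - s))) * Real.exp (ε' * t) :=
  integral_estimate_implies_exponential_dichotomy_general U V P hU hP hC M ω α hω hα hM hG p γ ε D
    hp hγ hε hD hint
end
end
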